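/- Let F be a Fractran program and 𝒜_F the associated Fractran-type canonical collection. If the i-th trajectory value n_i in the canonical system of 𝒜_F satisfies 0 ≤ n_i < b_i − 1, then n_{i+1} = f_F(n_i) and 0 ≤ n_{i+1} < b_{i+1} − 1; in particular the trajectory from that point on equals the Fractran trajectory of n_i (padded with zeros from the step at which F halts). Moreover if n_i = b_i − 1 then n_{i+1} = 1. -/

import Mathlib

/-- One Fractran iteration: on input `n ≥ 1`, multiply by the first fraction in the
program giving an integer; return `0` if there is no such fraction (the program halts)
or if `n = 0`. -/
def fractranStep (F : List ℚ) (n : ℕ) : ℕ :=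
  if n = 0 then 0
  else
    match F.find? (fun q => ((n : ℚ) * q).den == 1) with
    | some q => ((n : ℚ) * q).num.toNat
    | none => 0

/-- The Fractran program `F` halts on input `n`. -/
def FractranHalts (F : List ℚ) (n : ℕ) : Prop :=
  ∃ k : ℕ, (fractranStep F)^[k] n = 0

/-- The base `b = 1 + ⌈max_k F_k⌉` of the Fractran-type canonical collection `𝒜_F`. -/
def bBase (F : List ℚ) : ℤ := 1 + (F.map fun q => ⌈q⌉).foldr max 0

/-- The bases of `𝒜_F`: `b_i = b^(i+1)`. -/
def bF (F : List ℚ) (i : ℕ) : ℤ := bBase F ^ (i + 1)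

/-- The digit maps of `𝒜_F` on `[0, b_i)`: `f_F` except at the exceptional value
`b_i - 1`, which is sent to `1`. -/
def digitF (F : List ℚ) (i : ℕ) (r : ℤ) : ℤ :=
  if r = bF F i - 1 then 1 else (fractranStep F r.toNat : ℤ)

/-- The residue sets of `𝒜_F`: `T_i = {r - b_i · f_i(r) : 0 ≤ r < b_i}`. -/
def TFr (F : List ℚ) (i : ℕ) : Set ℤ :=
  (fun r => r - bF F i * digitF F i r) '' Set.Ico 0 (bF F i)

/-- The canonical system maps of `𝒜_F`: `f_i(n) = (n - t_i(n)) / b_i`, where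
`t_i(n) = r - b_i · f_i(r)` with `r = n mod b_i ∈ [0, b_i)` is the unique element of
`T_i` congruent to `n` modulo `b_i`. -/
def fFr (F : List ℚ) (i : ℕ) (n : ℤ) : ℤ :=
  (n - Int.emod n (bF F i)) / bF F i + digitF F i (Int.emod n (bF F i))

/-- The trajectory of `n` in the canonical system of `𝒜_F`:
`n_0 = n`, `n_{i+1} = f_i(n_i)`. -/
def trajFr (F : List ℚ) (n : ℤ) : ℕ → ℤ
  | 0 => n
  | i + 1 => fFr F i (trajFr F n i)

/-! On `[0, b_i)` the residue of `n` modulo `b_i` is `n` itself, so `f_i` is the digit map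
there. Every fraction of `F` is at most `b - 1`, hence `f_F(n) ≤ n (b - 1)`, and `n ≤ b_i - 2`
gives `f_F(n) ≤ b_{i+1} - b_i - 2b + 2 < b_{i+1} - 1`: the window `[0, b_i - 1)` is carried into
the next window, so by induction the trajectory keeps following `f_F`. -/

lemma ceil_le_bBase_sub_one {F : List ℚ} {q : ℚ} (hq : q ∈ F) : ⌈q⌉ ≤ bBase F - 1 := by
  have := List.le_max_of_le' 0 (List.mem_map_of_mem (f := fun q => ⌈q⌉) hq) le_rfl
  unfold bBase; omega

lemma one_le_bBase (F : List ℚ) : 1 ≤ bBase F := by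
  have : ∀ l : List ℤ, 0 ≤ l.foldr max 0 := fun l => by
    induction l <;> simp [*]
  unfold bBase; linarith [this (F.map fun q => ⌈q⌉)]

lemma one_le_bF (F : List ℚ) (i : ℕ) : 1 ≤ bF F i :=
  one_le_pow₀ (one_le_bBase F)

lemma bF_succ (F : List ℚ) (i : ℕ) : bF F (i + 1) = bF F i * bBase F :=
  pow_succ _ _

lemma natCast_fractranStep_le (F : List ℚ) (n : ℕ) :
    (fractranStep F n : ℤ) ≤ n * (bBase F - 1) := by
  have hb : (0 : ℤ) ≤ bBase F - 1 := by linarith [one_le_bBase F]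
  unfold fractranStep
  split
  · positivity
  split
  next q hfind =>
    have hq := List.mem_of_find?_eq_some hfind
    have hden : ((n : ℚ) * q).den = 1 := by simpa using List.find?_some hfind
    have hnum : (((n : ℚ) * q).num : ℚ) ≤ ((n * (bBase F - 1) : ℤ) : ℚ) := calc
      _ = (n : ℚ) * q := Rat.den_eq_one_iff _ |>.mp hden
      _ ≤ n * ⌈q⌉ := by gcongr; exact Int.le_ceil q
      _ ≤ ((n * (bBase F - 1) : ℤ) : ℚ) := by
        push_cast; gcongr; exact_mod_cast ceil_le_bBase_sub_one hq
    rw [Int.toNat_eq_max]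
    exact max_le (by exact_mod_cast hnum) (by positivity)
  · simpa using mul_nonneg (Int.natCast_nonneg n) hb

lemma fFr_of_mem_Ico (F : List ℚ) (i : ℕ) {n : ℤ} (h0 : 0 ≤ n) (h1 : n < bF F i) :
    fFr F i n = digitF F i n := by
  have hmod : n.emod (bF F i) = n := Int.emod_eq_of_lt h0 h1
  simp only [fFr, hmod, sub_self, Int.zero_ediv, zero_add]

lemma fFr_bF_sub_one (F : List ℚ) (j : ℕ) : fFr F j (bF F j - 1) = 1 := by
  have := one_le_bF F j
  rw [fFr_of_mem_Ico F j (by omega) (by omega), digitF, if_pos rfl]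

lemma fFr_natCast (F : List ℚ) (i : ℕ) {n : ℕ} (h : (n : ℤ) < bF F i - 1) :
    fFr F i n = fractranStep F n := by
  rw [fFr_of_mem_Ico F i (by omega) (by omega), digitF, if_neg h.ne, Int.toNat_natCast]

lemma natCast_fractranStep_lt_bF_succ (F : List ℚ) (i : ℕ) {n : ℕ} (h : (n : ℤ) < bF F i - 1) :
    (fractranStep F n : ℤ) < bF F (i + 1) - 1 := by
  have hb := one_le_bBase F
  rw [bF_succ]
  nlinarith [natCast_fractranStep_le F n, Int.natCast_nonneg n]

lemma iterate_fractranStep_lt_bF (F : List ℚ) (i : ℕ) {n : ℕ} (h : (n : ℤ) < bF F i - 1) (k : ℕ) :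
    ((fractranStep F)^[k] n : ℤ) < bF F (i + k) - 1 := by
  induction k with
  | zero => exact h
  | succ k ih =>
    rw [Function.iterate_succ_apply']
    exact natCast_fractranStep_lt_bF_succ F (i + k) ih

lemma eq_iterate_fractranStep_of_lt_bF (F : List ℚ) {traj : ℕ → ℤ}
    (htraj : ∀ j : ℕ, traj (j + 1) = fFr F j (traj j)) {i n : ℕ} (hn : traj i = n)
    (h : (n : ℤ) < bF F i - 1) (k : ℕ) :
    traj (i + k) = ((fractranStep F)^[k] n : ℤ) := by
  induction k with
  | zero => exact hn
  | succ k ih =>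
    rw [← add_assoc, htraj, ih, fFr_natCast F _ (iterate_fractranStep_lt_bF F i h k),
      Function.iterate_succ_apply']

theorem trajectory_follows_fractran
    (F : List ℚ)
    (traj : ℕ → ℤ) (htraj : ∀ j : ℕ, traj (j + 1) = fFr F j (traj j))
    (i : ℕ) (h0 : 0 ≤ traj i) (h1 : traj i < bF F i - 1) :
    (traj (i + 1) = (fractranStep F (traj i).toNat : ℤ) ∧
      0 ≤ traj (i + 1) ∧ traj (i + 1) < bF F (i + 1) - 1 ∧
      ∀ k : ℕ, traj (i + k) = ((fractranStep F)^[k] (traj i).toNat : ℤ)) ∧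
    (∀ j : ℕ, fFr F j (bF F j - 1) = 1) := by
  obtain ⟨n, hn⟩ := Int.eq_ofNat_of_zero_le h0
  rw [hn] at h1
  rw [hn, Int.toNat_natCast]
  have htail := eq_iterate_fractranStep_of_lt_bF F htraj hn h1
  refine ⟨⟨htail 1, ?_, ?_, htail⟩, fFr_bF_sub_one F⟩
  · rw [htail 1]; positivity
  · rw [htail 1]; exact iterate_fractranStep_lt_bF F i h1 1
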